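/- If f : F_2^n → F_2 is k-resilient (balanced and its output is statistically independent of any k of its inputs), then W_f(y) = 0 for every y ∈ F_2^n of Hamming weight at most k. -/

import Mathlib

open Finset

/-- Inner product over F_2. -/
def ip {n : ℕ} (x y : Fin n → ZMod 2) : ZMod 2 := ∑ i, x i * y i

/-- (-1)^s for s ∈ F_2, as a rational number. -/
def sgn (s : ZMod 2) : ℚ := (-1) ^ s.val

/-- Walsh transform of f at y. -/
def walsh {n : ℕ} (f : (Fin n → ZMod 2) → ZMod 2) (y : Fin n → ZMod 2) : ℚ :=
  ∑ z, sgn (f z + ip z y)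

/-- Autocorrelation coefficient of f at y. -/
def acorr {n : ℕ} (f : (Fin n → ZMod 2) → ZMod 2) (y : Fin n → ZMod 2) : ℚ :=
  ∑ x, sgn (f x + f (x + y))

/-- P_u : probability that f(u₁)+f(u₂)+f(u₃)+f(u₄)=0 when u₁+u₂+u₃+u₄ = u,
with (u₁,u₂,u₃) uniform in (F_2^n)^3 and u₄ = u + u₁ + u₂ + u₃. -/
def probP {n : ℕ} (f : (Fin n → ZMod 2) → ZMod 2) (u : Fin n → ZMod 2) : ℚ :=
  ((univ.filter (fun t : (Fin n → ZMod 2) × (Fin n → ZMod 2) × (Fin n → ZMod 2) =>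
      f t.1 + f t.2.1 + f t.2.2 + f (t.1 + t.2.1 + t.2.2 + u) = 0)).card : ℚ) / 2 ^ (3 * n)

/-- f is balanced: it takes the value 0 on exactly 2^(n-1) inputs. -/
def IsBalancedBF {n : ℕ} (f : (Fin n → ZMod 2) → ZMod 2) : Prop :=
  (univ.filter (fun x : Fin n → ZMod 2 => f x = 0)).card = 2 ^ (n - 1)

/-- f is k-resilient: fixing any at most k coordinates, the restriction is balanced. -/
def Resilient {n : ℕ} (f : (Fin n → ZMod 2) → ZMod 2) (k : ℕ) : Prop :=
  ∀ T : Finset (Fin n), T.card ≤ k → ∀ a : Fin n → ZMod 2,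
    (univ.filter (fun x : Fin n → ZMod 2 => (∀ i ∈ T, x i = a i) ∧ f x = 0)).card =
    (univ.filter (fun x : Fin n → ZMod 2 => (∀ i ∈ T, x i = a i) ∧ f x = 1)).card

/-!
The inner product `⟨z, y⟩` only depends on the pointwise product `z * y`, whose fibres are the
sets of inputs agreeing with a fixed one on the support of `y`. On each fibre the sign
`(-1)^⟨z, y⟩` is constant, while resilience makes `f` balanced there (the support has at most `k`
points), so every fibre contributes zero to the Walsh sum.
-/

theorem Finset.sum_eq_zero_of_sum_fiber_eq_zero {ι κ M : Type*} [DecidableEq κ] [AddCommMonoid M]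
    {s : Finset ι} (p : ι → κ) (F : ι → M)
    (h : ∀ i₀ ∈ s, ∑ i ∈ s with p i = p i₀, F i = 0) : ∑ i ∈ s, F i = 0 := by
  rw [← sum_fiberwise_of_maps_to (fun i hi => mem_image_of_mem p hi)]
  refine sum_eq_zero fun b hb => ?_
  obtain ⟨i₀, hi₀, rfl⟩ := mem_image.1 hb
  exact h i₀ hi₀

theorem Pi.mul_eq_mul_right_iff {ι M : Type*} [MulZeroClass M] [IsRightCancelMulZero M]
    {z z' y : ι → M} : z * y = z' * y ↔ ∀ i, y i ≠ 0 → z i = z' i := by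
  simp only [funext_iff, Pi.mul_apply, _root_.mul_eq_mul_right_iff, or_iff_not_imp_right]

lemma sgn_zero : sgn 0 = 1 := rfl

lemma sgn_one : sgn 1 = -1 := rfl

lemma sgn_add (s t : ZMod 2) : sgn (s + t) = sgn s * sgn t := by
  simp only [sgn, ZMod.val_add, ← pow_add, ← neg_one_pow_eq_pow_mod_two]

lemma sum_sgn_eq_card_sub_card {α : Type*} (s : Finset α) (g : α → ZMod 2) :
    ∑ x ∈ s, sgn (g x) = #{x ∈ s | g x = 0} - #{x ∈ s | g x = 1} := by
  have hne : ∀ b : ZMod 2, ¬b = 0 ↔ b = 1 := by decide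
  have hfiber (b : ZMod 2) : ∑ x ∈ s with g x = b, sgn (g x) = #{x ∈ s | g x = b} * sgn b := by
    rw [sum_congr rfl fun x hx => congrArg sgn (mem_filter.1 hx).2, sum_const, nsmul_eq_mul]
  rw [← sum_filter_add_sum_filter_not s (g · = 0), filter_congr fun x _ => hne (g x), hfiber,
    hfiber, sgn_zero, sgn_one]
  ring

lemma ip_eq_of_mul_eq {n : ℕ} {z z' y : Fin n → ZMod 2} (h : z * y = z' * y) :
    ip z y = ip z' y := by
  simp only [ip, ← Pi.mul_apply, h]

lemma Resilient.sum_sgn_eq_zero {n k : ℕ} {f : (Fin n → ZMod 2) → ZMod 2} (hres : Resilient f k)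
    {T : Finset (Fin n)} (hT : #T ≤ k) (a : Fin n → ZMod 2) :
    ∑ x with ∀ i ∈ T, x i = a i, sgn (f x) = 0 := by
  rw [sum_sgn_eq_card_sub_card, filter_filter, filter_filter, hres T hT a, sub_self]

theorem resilient_walsh_vanish {n k : ℕ} (f : (Fin n → ZMod 2) → ZMod 2)
    (hres : Resilient f k) :
    ∀ y : Fin n → ZMod 2, (univ.filter (fun i => y i ≠ 0)).card ≤ k → walsh f y = 0 := by
  intro y hy
  refine sum_eq_zero_of_sum_fiber_eq_zero (· * y) _ fun z₀ _ => ?_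
  have hfiber (z : Fin n → ZMod 2) :
      z * y = z₀ * y ↔ ∀ i ∈ univ.filter (fun i => y i ≠ 0), z i = z₀ i := by
    simp only [Pi.mul_eq_mul_right_iff, mem_filter, mem_univ, true_and]
  calc ∑ z with z * y = z₀ * y, sgn (f z + ip z y)
      = ∑ z with z * y = z₀ * y, sgn (f z) * sgn (ip z₀ y) := by
        refine sum_congr rfl fun z hz => ?_
        rw [sgn_add, ip_eq_of_mul_eq (mem_filter.1 hz).2]
    _ = 0 := by rw [← sum_mul, filter_congr fun z _ => hfiber z, hres.sum_sgn_eq_zero hy, zero_mul]
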